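/- arXiv:1405.7527 — 7 statements merged into one kernel-verified Lean document; each statement's English description precedes it below -/
import Mathlib

section
/- Let P, Q ∈ 1 + T·L[T] be polynomials over a field L. Then there exist polynomials a(T₁, T₂), b(T₁, T₂) ∈ L[T₁, T₂] such that a(T₁, T₂)·P(T₁) + b(T₁, T₂)·Q(T₂) = (P ⋆ Q)(T₁·T₂), where P ⋆ Q is the convolution polynomial whose inverse-roots are the products of inverse-roots of P and Q. -/
/-!
Over `K = AlgebraicClosure L` every factor of `(P ⋆ Q)(T₁T₂)` lies in a two-generator ideal:
`1 - ab T₁T₂ = aT₁ (1 - bT₂) + (1 - aT₁)`. Multiplying these memberships, first over the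
inverse roots `b` of `Q` and then over the inverse roots `a` of `P`, puts `(P ⋆ Q)(T₁T₂)` in the
ideal `(P(T₁), Q(T₂))` of `K[T₁, T₂]`. Since `K[T₁, T₂]` is a base change of the faithfully flat
`L`-algebra `K`, it is faithfully flat over `L[T₁, T₂]`, so membership descends to `L[T₁, T₂]`.
-/

open Polynomial

theorem Multiset.prod_map_product {α β M : Type*} [CommMonoid M] (s : Multiset α)
    (t : Multiset β) (f : α × β → M) :
    ((s ×ˢ t).map f).prod = (s.map fun a => (t.map fun b => f (a, b)).prod).prod := by
  simp only [SProd.sprod, Multiset.product, Multiset.map_bind, Multiset.prod_bind,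
    Multiset.map_map, Function.comp_def]

theorem Ideal.multiset_prod_mem_span_singleton_sup {R ι : Type*} [CommRing R] (I : Ideal R)
    (s : Multiset ι) (f g : ι → R) (h : ∀ i ∈ s, f i ∈ Ideal.span {g i} ⊔ I) :
    (s.map f).prod ∈ Ideal.span {(s.map g).prod} ⊔ I := by
  simp only [← Ideal.mem_quotient_iff_mem_sup, Ideal.map_span, Set.image_singleton,
    Ideal.mem_span_singleton, map_multiset_prod, Multiset.map_map] at h ⊢
  exact Multiset.prod_dvd_prod_of_dvd _ _ h

theorem prod_one_sub_mul_mem_span_pair {K R : Type*} [CommRing K] [CommRing R] [Algebra K R]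
    (x y : R) (A B : Multiset K) :
    ((A ×ˢ B).map fun p => 1 - algebraMap K R (p.1 * p.2) * (x * y)).prod ∈
      Ideal.span {(A.map fun a => 1 - algebraMap K R a * x).prod,
        (B.map fun b => 1 - algebraMap K R b * y).prod} := by
  set u := fun a => 1 - algebraMap K R a * x
  set v := fun b => 1 - algebraMap K R b * y
  have factor (a b : K) :
      1 - algebraMap K R (a * b) * (x * y) ∈ Ideal.span {v b} ⊔ Ideal.span {u a} := by
    have split : 1 - algebraMap K R (a * b) * (x * y) = algebraMap K R a * x * v b + u a := by
      simp only [u, v, map_mul]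
      ring
    rw [split]
    exact add_mem (Ideal.mem_sup_left (Ideal.mul_mem_left _ _ (Ideal.mem_span_singleton_self _)))
      (Ideal.mem_sup_right (Ideal.mem_span_singleton_self _))
  have row (a : K) : (B.map fun b => 1 - algebraMap K R (a * b) * (x * y)).prod ∈
      Ideal.span {u a} ⊔ Ideal.span {(B.map v).prod} := by
    rw [sup_comm]
    exact Ideal.multiset_prod_mem_span_singleton_sup _ B _ v fun b _ => factor a b
  have := Ideal.multiset_prod_mem_span_singleton_sup _ A _ u fun a _ => row a
  rwa [Ideal.span_insert, Multiset.prod_map_product]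

namespace MvPolynomial

theorem map_aeval_polynomial {σ R S : Type*} [CommSemiring R] [CommSemiring S] (f : R →+* S)
    (g : MvPolynomial σ R) (p : R[X]) :
    map f (Polynomial.aeval g p) = Polynomial.aeval (map f g) (p.map f) := by
  rw [Polynomial.aeval_def, Polynomial.aeval_def, Polynomial.eval₂_map, Polynomial.hom_eval₂]
  congr 1
  ext
  simp

section FaithfullyFlat

variable {σ R S : Type*} [CommRing R] [CommRing S] [Algebra R S] [Module.FaithfullyFlat R S]

attribute [local instance] algebraMvPolynomial

theorem faithfullyFlat_of_faithfullyFlat :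
    Module.FaithfullyFlat (MvPolynomial σ R) (MvPolynomial σ S) :=
  .of_linearEquiv _ _
    (Algebra.IsPushout.equiv R (MvPolynomial σ R) S (MvPolynomial σ S)).symm.toLinearEquiv

theorem mem_of_map_mem_ideal_map {I : Ideal (MvPolynomial σ R)} {p : MvPolynomial σ R}
    (h : map (algebraMap R S) p ∈ I.map (map (algebraMap R S))) : p ∈ I := by
  have := faithfullyFlat_of_faithfullyFlat (σ := σ) (R := R) (S := S)
  rw [← I.comap_map_eq_self_of_faithfullyFlat (B := MvPolynomial σ S)]
  exact h

end FaithfullyFlat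

end MvPolynomial

theorem star_ideal_membership_general (L : Type*) [Field L]
    (P Q S : L[X])
    (A B : Multiset (AlgebraicClosure L))
    (hA : P.map (algebraMap L (AlgebraicClosure L)) =
      (A.map fun a => 1 - C a * X).prod)
    (hB : Q.map (algebraMap L (AlgebraicClosure L)) =
      (B.map fun b => 1 - C b * X).prod)
    (hSmap : S.map (algebraMap L (AlgebraicClosure L)) =
      ((A ×ˢ B).map fun p => 1 - C (p.1 * p.2) * X).prod) :
    ∃ a b : MvPolynomial (Fin 2) L,
      a * Polynomial.aeval (MvPolynomial.X 0) P
        + b * Polynomial.aeval (MvPolynomial.X 1) Q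
        = Polynomial.aeval (MvPolynomial.X 0 * MvPolynomial.X 1) S := by
  rw [← Ideal.mem_span_pair]
  refine MvPolynomial.mem_of_map_mem_ideal_map (R := L) (S := AlgebraicClosure L) ?_
  rw [Ideal.map_span, Set.image_pair, MvPolynomial.map_aeval_polynomial,
    MvPolynomial.map_aeval_polynomial, MvPolynomial.map_aeval_polynomial, map_mul,
    MvPolynomial.map_X, MvPolynomial.map_X, hA, hB, hSmap]
  simp only [map_multiset_prod, Multiset.map_map, Function.comp_def, map_sub, map_one,
    C_mul_X_eq_monomial, aeval_monomial, pow_one]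
  exact prod_one_sub_mul_mem_span_pair _ _ A B

/-- for `P, Q ∈ 1 + T·L[T]` with convolution `P ⋆ Q` (here `S`,
characterized by its factorization over the algebraic closure), there are
polynomials `a(T₁,T₂), b(T₁,T₂) ∈ L[T₁,T₂]` with
`a(T₁,T₂)P(T₁) + b(T₁,T₂)Q(T₂) = (P ⋆ Q)(T₁T₂)`. -/
theorem star_ideal_membership (L : Type*) [Field L] [CharZero L]
    (P Q S : L[X]) (hP : P.coeff 0 = 1) (hQ : Q.coeff 0 = 1) (hS : S.coeff 0 = 1)
    (A B : Multiset (AlgebraicClosure L))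
    (hA : P.map (algebraMap L (AlgebraicClosure L)) =
      (A.map fun a => 1 - C a * X).prod)
    (hB : Q.map (algebraMap L (AlgebraicClosure L)) =
      (B.map fun b => 1 - C b * X).prod)
    (hSmap : S.map (algebraMap L (AlgebraicClosure L)) =
      ((A ×ˢ B).map fun p => 1 - C (p.1 * p.2) * X).prod) :
    ∃ a b : MvPolynomial (Fin 2) L,
      a * Polynomial.aeval (MvPolynomial.X 0) P
        + b * Polynomial.aeval (MvPolynomial.X 1) Q
        = Polynomial.aeval (MvPolynomial.X 0 * MvPolynomial.X 1) S :=
  star_ideal_membership_general L P Q S A B hA hB hSmap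
end

section
/- Let D be a finite-dimensional K-vector space D_st with a linear operator Φ, N = 0, together with a K-vector space D_K containing D_st via an isomorphism ι : D_st → D_K, and a subspace Fil⁰ D_K ⊆ D_K. Form the complex C: (D_st ⊕ Fil⁰ D_K) → (D_st ⊕ D_st ⊕ D_K) → D_st with d⁰(u,v) = (P(Φ)u, Nu, ι(u) - v) and d¹(w,x,y) = Nw - P(qΦ)x. If P(Φ) and P(qΦ) are bijective on D_st, then the map D_K → H¹(C) induced by y ↦ [(0, 0, y)] is surjective with kernel Fil⁰ D_K, giving an isomorphism D_K / Fil⁰ D_K ≅ H¹(C). -/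
open Polynomial

/-!
Since `N = 0`, a 1-cocycle `(w, x, y)` only has to satisfy `P(qΦ) x = 0`, i.e. `x = 0`. Writing
`w = P(Φ) u` shows `(w, 0, y) ≡ (0, 0, y - ι u)` modulo coboundaries, so every class comes from
`D_K`; and `(0, 0, y) = d⁰(u, v)` forces `P(Φ) u = 0`, hence `u = 0` and `y = -v ∈ Fil⁰ D_K`.
-/

namespace ConvenientComplex

variable {R M E : Type*} [CommRing R] [AddCommGroup M] [Module R M] [AddCommGroup E] [Module R E]
  {F : Submodule R E} {ι : M →ₗ[R] E} {A B : M →ₗ[R] M}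
  {d0 : M × F →ₗ[R] M × M × E} {d1 : M × M × E →ₗ[R] M}

theorem mem_ker_iff_snd_eq_zero (hd1 : ∀ w x y, d1 (w, x, y) = -B x)
    (hB : Function.Injective B) (w x : M) (y : E) :
    (w, x, y) ∈ LinearMap.ker d1 ↔ x = 0 := by
  rw [LinearMap.mem_ker, hd1, neg_eq_zero, map_eq_zero_iff B hB]

theorem exists_sub_mem_range (hd0 : ∀ u (v : F), d0 (u, v) = (A u, 0, ι u - v))
    (hA : Function.Surjective A) (w : M) (y : E) :
    ∃ y', (w, 0, y) - (0, 0, y') ∈ LinearMap.range d0 := by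
  obtain ⟨u, rfl⟩ := hA w
  exact ⟨y - ι u, (u, 0), by simp [hd0]⟩

theorem zero_zero_mem_range_iff (hd0 : ∀ u (v : F), d0 (u, v) = (A u, 0, ι u - v))
    (hA : Function.Injective A) (y : E) :
    ((0 : M), (0 : M), y) ∈ LinearMap.range d0 ↔ y ∈ F := by
  constructor
  · rintro ⟨⟨u, v⟩, huv⟩
    simp only [hd0, Prod.mk.injEq, map_eq_zero_iff A hA, true_and] at huv
    obtain ⟨rfl, rfl⟩ := huv
    simp [neg_mem v.2]
  · exact fun hy ↦ ⟨(0, -⟨y, hy⟩), by simp [hd0]⟩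

end ConvenientComplex

theorem convenient_H1_iso_general (K Dst DK : Type*) [Field K]
    [AddCommGroup Dst] [Module K Dst]
    [AddCommGroup DK] [Module K DK]
    (q : K)
    (Φ : Module.End K Dst)
    (ι : Dst ≃ₗ[K] DK) (Fil : Submodule K DK)
    (P : K[X])
    (hPΦ : Function.Bijective (Polynomial.aeval Φ P))
    (hPqΦ : Function.Bijective (Polynomial.aeval (q • Φ) P))
    (d0 : (Dst × Fil) →ₗ[K] (Dst × Dst × DK))
    (hd0 : ∀ (u : Dst) (v : Fil),
      d0 (u, v) = (Polynomial.aeval Φ P u, 0, ι u - (v : DK)))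
    (d1 : (Dst × Dst × DK) →ₗ[K] Dst)
    (hd1 : ∀ (w x : Dst) (y : DK), d1 (w, x, y) = -(Polynomial.aeval (q • Φ) P x))
    (j : DK →ₗ[K]
      (LinearMap.ker d1 ⧸ (LinearMap.range d0).comap (LinearMap.ker d1).subtype))
    (hj : ∀ (y : DK) (h : ((0 : Dst), (0 : Dst), y) ∈ LinearMap.ker d1),
      j y = Submodule.Quotient.mk ⟨((0 : Dst), (0 : Dst), y), h⟩) :
    Function.Surjective j ∧ LinearMap.ker j = Fil := by
  have hker := ConvenientComplex.mem_ker_iff_snd_eq_zero hd1 hPqΦ.injective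
  have hj' (y : DK) := hj y ((hker 0 0 y).mpr rfl)
  constructor
  · intro z
    obtain ⟨⟨⟨w, x, y⟩, hz⟩, rfl⟩ := Submodule.Quotient.mk_surjective _ z
    obtain rfl := (hker w x y).mp hz
    obtain ⟨y', hy'⟩ :=
      ConvenientComplex.exists_sub_mem_range (ι := ι.toLinearMap) hd0 hPΦ.surjective w y
    exact ⟨y', by rw [hj', eq_comm, Submodule.Quotient.eq]; exact hy'⟩
  · ext y
    rw [LinearMap.mem_ker, hj', Submodule.Quotient.mk_eq_zero, Submodule.mem_comap]
    exact ConvenientComplex.zero_zero_mem_range_iff (ι := ι.toLinearMap) hd0 hPΦ.injective y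

/-- for a convenient module (`N = 0`, `P(Φ)` and `P(qΦ)` bijective),
the map `D_K → H¹(C)`, `y ↦ [(0,0,y)]`, is surjective with kernel `Fil⁰ D_K`,
giving an isomorphism `D_K / Fil⁰ D_K ≅ H¹(C)`. -/
theorem convenient_H1_iso (K Dst DK : Type*) [Field K]
    [AddCommGroup Dst] [Module K Dst] [FiniteDimensional K Dst]
    [AddCommGroup DK] [Module K DK]
    (q : K) (hq : q ≠ 0)
    (Φ : Module.End K Dst) (hΦ : Function.Bijective Φ)
    (ι : Dst ≃ₗ[K] DK) (Fil : Submodule K DK)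
    (P : K[X]) (hP0 : P.coeff 0 = 1)
    (hPΦ : Function.Bijective (Polynomial.aeval Φ P))
    (hPqΦ : Function.Bijective (Polynomial.aeval (q • Φ) P))
    (d0 : (Dst × Fil) →ₗ[K] (Dst × Dst × DK))
    (hd0 : ∀ (u : Dst) (v : Fil),
      d0 (u, v) = (Polynomial.aeval Φ P u, 0, ι u - (v : DK)))
    (d1 : (Dst × Dst × DK) →ₗ[K] Dst)
    (hd1 : ∀ (w x : Dst) (y : DK), d1 (w, x, y) = -(Polynomial.aeval (q • Φ) P x))
    (j : DK →ₗ[K]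
      (LinearMap.ker d1 ⧸ (LinearMap.range d0).comap (LinearMap.ker d1).subtype))
    (hj : ∀ (y : DK) (h : ((0 : Dst), (0 : Dst), y) ∈ LinearMap.ker d1),
      j y = Submodule.Quotient.mk ⟨((0 : Dst), (0 : Dst), y), h⟩) :
    Function.Surjective j ∧ LinearMap.ker j = Fil :=
  convenient_H1_iso_general K Dst DK q Φ ι Fil P hPΦ hPqΦ d0 hd0 d1 hd1 j hj
end

section
/- In the setting of the previous complex (N = 0, P(Φ) and P(qΦ) bijective), the inverse of the isomorphism D_K/Fil⁰ ≅ H¹(C) is given explicitly by [(w, x, y)] ↦ y - ι(P(Φ)⁻¹ w) mod Fil⁰ D_K; that is, for every cocycle (w, x, y) ∈ ker(d¹), the classes of (w,x,y) and (0, 0, y - ι(P(Φ)⁻¹w)) in H¹(C) are equal. -/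
open Polynomial

theorem convenient_H1_iso_inverse_general (K Dst DK : Type*) [Field K]
    [AddCommGroup Dst] [Module K Dst]
    [AddCommGroup DK] [Module K DK]
    (q : K)
    (Φ : Module.End K Dst)
    (ι : Dst ≃ₗ[K] DK) (Fil : Submodule K DK)
    (P : K[X])
    (hPqΦ : Function.Bijective (Polynomial.aeval (q • Φ) P))
    (d0 : (Dst × Fil) →ₗ[K] (Dst × Dst × DK))
    (hd0 : ∀ (u : Dst) (v : Fil),
      d0 (u, v) = (Polynomial.aeval Φ P u, 0, ι u - (v : DK)))
    (d1 : (Dst × Dst × DK) →ₗ[K] Dst)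
    (hd1 : ∀ (w x : Dst) (y : DK), d1 (w, x, y) = -(Polynomial.aeval (q • Φ) P x)) :
    ∀ (w x : Dst) (y : DK), d1 (w, x, y) = 0 →
      ∀ w' : Dst, Polynomial.aeval Φ P w' = w →
        ((w, x, y) - ((0 : Dst), (0 : Dst), y - ι w')) ∈ LinearMap.range d0 := by
  intro w x y hcocycle w' hw'
  obtain rfl : x = 0 :=
    hPqΦ.injective (by rw [map_zero, ← neg_eq_zero, ← hd1 w x y, hcocycle])
  refine ⟨(w', 0), ?_⟩
  rw [hd0]
  simp [hw']

/-- in the convenient situation, the inverse of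
`D_K/Fil⁰ ≅ H¹(C)` is `[(w,x,y)] ↦ y - ι(P(Φ)⁻¹w) mod Fil⁰`: for every cocycle
`(w,x,y)` the classes of `(w,x,y)` and `(0,0, y - ι(P(Φ)⁻¹w))` agree in `H¹(C)`,
i.e. their difference lies in the image of `d⁰`. -/
theorem convenient_H1_iso_inverse (K Dst DK : Type*) [Field K]
    [AddCommGroup Dst] [Module K Dst] [FiniteDimensional K Dst]
    [AddCommGroup DK] [Module K DK]
    (q : K) (hq : q ≠ 0)
    (Φ : Module.End K Dst) (hΦ : Function.Bijective Φ)
    (ι : Dst ≃ₗ[K] DK) (Fil : Submodule K DK)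
    (P : K[X]) (hP0 : P.coeff 0 = 1)
    (hPΦ : Function.Bijective (Polynomial.aeval Φ P))
    (hPqΦ : Function.Bijective (Polynomial.aeval (q • Φ) P))
    (d0 : (Dst × Fil) →ₗ[K] (Dst × Dst × DK))
    (hd0 : ∀ (u : Dst) (v : Fil),
      d0 (u, v) = (Polynomial.aeval Φ P u, 0, ι u - (v : DK)))
    (d1 : (Dst × Dst × DK) →ₗ[K] Dst)
    (hd1 : ∀ (w x : Dst) (y : DK), d1 (w, x, y) = -(Polynomial.aeval (q • Φ) P x)) :
    ∀ (w x : Dst) (y : DK), d1 (w, x, y) = 0 →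
      ∀ w' : Dst, Polynomial.aeval Φ P w' = w →
        ((w, x, y) - ((0 : Dst), (0 : Dst), y - ι w')) ∈ LinearMap.range d0 :=
  convenient_H1_iso_inverse_general K Dst DK q Φ ι Fil P hPqΦ d0 hd0 d1 hd1
end

section
/- Let D_st = K be the one-dimensional module with Φ acting as multiplication by q⁻¹ (the module Q_p(1): φ = p⁻¹ twisted), N = 0, D_K = K, Fil⁰ D_K = 0. If P(1) ≠ 0 and P(q⁻¹) ≠ 0, then H¹ of the complex C_{st,K,P}(Q_p(1)) — i.e. of K ⊕ 0 → K ⊕ K ⊕ K → K with d⁰(u) = (P(q⁻¹)u, 0, u) and d¹(w,x,y) = -P(q⁻¹·q)x = -P(1)x — is isomorphic to K. -/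
open Polynomial

/-!
Since `P(1) ≠ 0`, the cocycles are the vectors `(w, 0, y)`, and the coboundaries `(P(q⁻¹)u, 0, u)`
are exactly the cocycles killed by `(w, x, y) ↦ w - P(q⁻¹) y`. This functional is onto already on
the cocycles `(w, 0, 0)`, so it identifies `H¹` with `K`.
-/

namespace QpOneComplex

variable {K : Type*} [CommRing K]

def fstSubSmulLast (c : K) : K × K × K →ₗ[K] K :=
  LinearMap.fst K K (K × K) - c • (LinearMap.snd K K K).comp (LinearMap.snd K K (K × K))

@[simp]
lemma fstSubSmulLast_apply (c : K) (v : K × K × K) : fstSubSmulLast c v = v.1 - c * v.2.2 := rfl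

lemma mem_ker_iff [NoZeroDivisors K] {a : K} (ha : a ≠ 0) {d1 : K × K × K →ₗ[K] K}
    (hd1 : ∀ w x y : K, d1 (w, x, y) = -(a * x)) (v : K × K × K) :
    v ∈ LinearMap.ker d1 ↔ v.2.1 = 0 := by
  obtain ⟨w, x, y⟩ := v
  simp [hd1, ha]

lemma mem_range_iff {c : K} {d0 : K →ₗ[K] K × K × K}
    (hd0 : ∀ u : K, d0 u = (c * u, 0, u)) (v : K × K × K) :
    v ∈ LinearMap.range d0 ↔ v.1 = c * v.2.2 ∧ v.2.1 = 0 := by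
  obtain ⟨w, x, y⟩ := v
  dsimp only
  constructor
  · rintro ⟨u, hu⟩
    simp only [hd0, Prod.mk.injEq] at hu
    obtain ⟨rfl, rfl, rfl⟩ := hu
    exact ⟨rfl, rfl⟩
  · rintro ⟨rfl, rfl⟩
    exact ⟨y, hd0 y⟩

lemma fstSubSmulLast_domRestrict_surjective (c : K) {d1 : K × K × K →ₗ[K] K} {a : K}
    (hd1 : ∀ w x y : K, d1 (w, x, y) = -(a * x)) :
    Function.Surjective ((fstSubSmulLast c).domRestrict (LinearMap.ker d1)) := fun w =>
  ⟨⟨(w, 0, 0), by simp [hd1]⟩, by simp⟩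

lemma ker_fstSubSmulLast_domRestrict [NoZeroDivisors K] {a c : K} (ha : a ≠ 0)
    {d0 : K →ₗ[K] K × K × K} (hd0 : ∀ u : K, d0 u = (c * u, 0, u))
    {d1 : K × K × K →ₗ[K] K} (hd1 : ∀ w x y : K, d1 (w, x, y) = -(a * x)) :
    LinearMap.ker ((fstSubSmulLast c).domRestrict (LinearMap.ker d1)) =
      (LinearMap.range d0).comap (LinearMap.ker d1).subtype := by
  ext ⟨v, hv⟩
  have hx : v.2.1 = 0 := (mem_ker_iff ha hd1 v).mp hv
  simp [mem_range_iff hd0, hx, sub_eq_zero]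

end QpOneComplex

theorem H1_Qp_one_iso_general (K : Type*) [Field K]
    (q : K)
    (P : K[X])
    (hP1 : P.eval 1 ≠ 0)
    (d0 : K →ₗ[K] (K × K × K))
    (hd0 : ∀ u : K, d0 u = (P.eval q⁻¹ * u, 0, u))
    (d1 : (K × K × K) →ₗ[K] K)
    (hd1 : ∀ w x y : K, d1 (w, x, y) = -(P.eval 1 * x)) :
    Nonempty
      ((LinearMap.ker d1 ⧸ (LinearMap.range d0).comap (LinearMap.ker d1).subtype)
        ≃ₗ[K] K) :=
  ⟨(Submodule.quotEquivOfEq _ _ (QpOneComplex.ker_fstSubSmulLast_domRestrict hP1 hd0 hd1).symm).trans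
    (LinearMap.quotKerEquivOfSurjective _ (QpOneComplex.fstSubSmulLast_domRestrict_surjective _ hd1))⟩

/-- for the module `Q_p(1)` (`D_st = K` with `Φ = q⁻¹`, `N = 0`,
`D_K = K`, `Fil⁰ = 0`), if `P(1) ≠ 0` and `P(q⁻¹) ≠ 0` then `H¹` of the complex
`K → K ⊕ K ⊕ K → K`, `d⁰(u) = (P(q⁻¹)u, 0, u)`, `d¹(w,x,y) = -P(1)x`,
is isomorphic to `K`. -/
theorem H1_Qp_one_iso (K : Type*) [Field K]
    (q : K) (hq : q ≠ 0)
    (P : K[X]) (hP0 : P.coeff 0 = 1)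
    (hP1 : P.eval 1 ≠ 0) (hPq : P.eval q⁻¹ ≠ 0)
    (d0 : K →ₗ[K] (K × K × K))
    (hd0 : ∀ u : K, d0 u = (P.eval q⁻¹ * u, 0, u))
    (d1 : (K × K × K) →ₗ[K] K)
    (hd1 : ∀ w x y : K, d1 (w, x, y) = -(P.eval 1 * x)) :
    Nonempty
      ((LinearMap.ker d1 ⧸ (LinearMap.range d0).comap (LinearMap.ker d1).subtype)
        ≃ₗ[K] K) :=
  H1_Qp_one_iso_general K q P hP1 d0 hd0 d1 hd1
end

section
/- Let D_st be a finite-dimensional K-vector space with bijective Φ and N = 0, convenient for P (i.e. P(Φ), P(qΦ) bijective), and let λ ∈ (D_K/Fil⁰ D_K)*. Suppose Q ∈ 1 + T·K[T] satisfies Q(Φ*)(λ) = 0 (λ ∈ H⁰ of the Q-complex for D*(1)) and (P⋆Q)(1) ≠ 0, (P⋆Q)(q⁻¹) ≠ 0. Then for every class in H¹ of C_{st,K,P}(D) represented by a cocycle (w, 0, y), the cup product with λ (given in degree (1,0) by the formula of the explicit cup-product table, which under the trace isomorphism H¹ ≅ K reduces to λ(y - P(Φ)⁻¹w)) equals λ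 applied to the image of the class under the isomorphism H¹(C_{st,K,P}(D)) ≅ D_K/Fil⁰. -/
open Polynomial

/-- for a convenient module `D` and a functional `λ` on `D_K`
vanishing on `Fil⁰` and killed by `Q(Φ^∨)`, with `(P⋆Q)(1) ≠ 0` and
`(P⋆Q)(q⁻¹) ≠ 0`, the cup product of the class of a cocycle `(w, 0, y)` with
`λ`, computed by the explicit formula (the degree-(1,0) entry of the cup
product table, followed by the trace isomorphism `H¹(Q_p(1)) ≅ K` of
Proposition 1.8, namely `(W, X, Y) ↦ Y - (P⋆Q)(q⁻¹)⁻¹·W`), agrees with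
evaluating `λ` at the image `y - ι(P(Φ)⁻¹w)` of the class under the
isomorphism `H¹ ≅ D_K/Fil⁰`. -/
theorem cup_product_with_functional (K Dst DK : Type*) [Field K] [CharZero K]
    [AddCommGroup Dst] [Module K Dst] [FiniteDimensional K Dst]
    [AddCommGroup DK] [Module K DK]
    (q : K) (hq : q ≠ 0)
    (Φ Φinv : Module.End K Dst) (hΦinv : Φ * Φinv = 1 ∧ Φinv * Φ = 1)
    (ι : Dst ≃ₗ[K] DK) (Fil : Submodule K DK)
    (P Q R : K[X])
    (hP0 : P.coeff 0 = 1) (hQ0 : Q.coeff 0 = 1) (hR0 : R.coeff 0 = 1)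
    -- `D` is convenient for `P`:
    (hPΦ : Function.Bijective (Polynomial.aeval Φ P))
    (hPqΦ : Function.Bijective (Polynomial.aeval (q • Φ) P))
    -- the functional `λ ∈ (D_K/Fil⁰)^* = Fil⁰ D^*(1)_K`:
    (lam : DK →ₗ[K] K) (hlamFil : ∀ v ∈ Fil, lam v = 0)
    -- the dual Frobenius `Φ^∨`, `(Φ^∨ μ)(v) = q⁻¹ μ(Φ⁻¹ v)`:
    (Φd : Module.End K (DK →ₗ[K] K))
    (hΦd : ∀ (μ : DK →ₗ[K] K) (v : DK), Φd μ v = q⁻¹ * μ (ι (Φinv (ι.symm v))))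
    -- `λ ∈ H⁰_{st,K,Q}(D^*(1))`:
    (hQlam : Polynomial.aeval Φd Q lam = 0)
    -- `R = P ⋆ Q`, via polynomials `a, b` with `a·P(T₁) + b·Q(T₂) = R(T₁T₂)`:
    (a b : MvPolynomial (Fin 2) K)
    (hab : a * Polynomial.aeval (MvPolynomial.X 0) P
        + b * Polynomial.aeval (MvPolynomial.X 1) Q
        = Polynomial.aeval (MvPolynomial.X 0 * MvPolynomial.X 1) R)
    (hR1 : R.eval 1 ≠ 0) (hRq : R.eval q⁻¹ ≠ 0)
    -- a cocycle `(w, 0, y)` and `w' = P(Φ)⁻¹ w`: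
    (w : Dst) (y : DK) (w' : Dst) (hw' : Polynomial.aeval Φ P w' = w)
    -- `W`: the first component `a(Φ₁,Φ₂)(w ⊗ λ)` of the cup product, evaluated
    -- through the pairing `D_st ⊗ D_st^∨ → K`:
    (W : K)
    (hW : W = ∑ m ∈ a.support,
      MvPolynomial.coeff m a * ((Φd ^ (m 1)) lam) (ι ((Φ ^ (m 0)) w))) :
    lam y - (R.eval q⁻¹)⁻¹ * W = lam (y - ι w') := by

  classical
  -- the pairing `cf i j = (Φd^j λ)(ι (Φ^i w'))`
  set cf : ℕ → ℕ → K := fun i j => ((Φd ^ j) lam) (ι ((Φ ^ i) w')) with hcf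
  -- the linear functional E on MvPolynomial (Fin 2) K
  let E : MvPolynomial (Fin 2) K →ₗ[K] K :=
    Finsupp.linearCombination K (fun m : Fin 2 →₀ ℕ => cf (m 0) (m 1)) ∘ₗ
      (AddMonoidAlgebra.coeffLinearEquiv K).toLinearMap
  have hEmono : ∀ (m : Fin 2 →₀ ℕ) (k : K),
      E (MvPolynomial.monomial m k) = k * cf (m 0) (m 1) := by
    intro m k
    rw [← MvPolynomial.single_eq_monomial]
    show Finsupp.linearCombination K _ (Finsupp.single m k) = _
    rw [Finsupp.linearCombination_single, smul_eq_mul]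
  -- basic multiplication facts on monomials
  have hX0 : ∀ (m : Fin 2 →₀ ℕ) (k : K) (i : ℕ),
      E (MvPolynomial.monomial m k * MvPolynomial.X 0 ^ i) = k * cf (m 0 + i) (m 1) := by
    intro m k i
    rw [MvPolynomial.X_pow_eq_monomial, MvPolynomial.monomial_mul, mul_one, hEmono]
    simp [Finsupp.single_apply]
  have hX1 : ∀ (m : Fin 2 →₀ ℕ) (k : K) (j : ℕ),
      E (MvPolynomial.monomial m k * MvPolynomial.X 1 ^ j) = k * cf (m 0) (m 1 + j) := by
    intro m k j
    rw [MvPolynomial.X_pow_eq_monomial, MvPolynomial.monomial_mul, mul_one, hEmono]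
    simp [Finsupp.single_apply]
  -- the step relation: multiplying both indices by one gives a factor q⁻¹
  have hstep : ∀ i j : ℕ, cf (i + 1) (j + 1) = q⁻¹ * cf i j := by
    intro i j
    show ((Φd ^ (j + 1)) lam) (ι ((Φ ^ (i + 1)) w')) = q⁻¹ * ((Φd ^ j) lam) (ι ((Φ ^ i) w'))
    rw [pow_succ' Φd, pow_succ' Φ, Module.End.mul_apply, Module.End.mul_apply, hΦd]
    have hinv : Φinv (Φ ((Φ ^ i) w')) = (Φ ^ i) w' := by
      have : (Φinv * Φ) ((Φ ^ i) w') = (Φ ^ i) w' := by rw [hΦinv.2]; rfl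
      exact this
    rw [ι.symm_apply_apply, hinv]
  -- E of powers of X0 * X1
  have hE1 : E 1 = lam (ι w') := by
    have h1 : (1 : MvPolynomial (Fin 2) K) = MvPolynomial.monomial 0 1 := by
      rw [MvPolynomial.monomial_zero']; simp
    rw [h1, hEmono]
    simp [hcf]
  have hX01 : ∀ g : MvPolynomial (Fin 2) K,
      E (g * (MvPolynomial.X 0 * MvPolynomial.X 1)) = q⁻¹ * E g := by
    intro g
    induction g using MvPolynomial.induction_on' with
    | monomial m k =>
        have hXX : (MvPolynomial.X 0 * MvPolynomial.X 1 : MvPolynomial (Fin 2) K)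
            = MvPolynomial.monomial (Finsupp.single 0 1 + Finsupp.single 1 1) 1 := by
          rw [show (MvPolynomial.X 0 : MvPolynomial (Fin 2) K)
              = MvPolynomial.monomial (Finsupp.single 0 1) 1 from rfl,
            show (MvPolynomial.X 1 : MvPolynomial (Fin 2) K)
              = MvPolynomial.monomial (Finsupp.single 1 1) 1 from rfl,
            MvPolynomial.monomial_mul, mul_one]
        rw [hXX, MvPolynomial.monomial_mul, mul_one, hEmono, hEmono]
        have h0 : ((m + (Finsupp.single 0 1 + Finsupp.single 1 1) : Fin 2 →₀ ℕ)) 0 = m 0 + 1 := by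
          simp [Finsupp.single_apply]
        have h1 : ((m + (Finsupp.single 0 1 + Finsupp.single 1 1) : Fin 2 →₀ ℕ)) 1 = m 1 + 1 := by
          simp [Finsupp.single_apply]
        rw [h0, h1, hstep]
        ring
    | add p r hp hr =>
        rw [add_mul, map_add, map_add, hp, hr, mul_add]
  have hpow : ∀ n : ℕ,
      E ((MvPolynomial.X 0 * MvPolynomial.X 1 : MvPolynomial (Fin 2) K) ^ n)
        = q⁻¹ ^ n * lam (ι w') := by
    intro n
    induction n with
    | zero => simpa using hE1
    | succ n ih => rw [pow_succ, hX01, ih, pow_succ]; ring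
  -- the R-side
  have hRside : E (Polynomial.aeval (MvPolynomial.X 0 * MvPolynomial.X 1) R)
      = R.eval q⁻¹ * lam (ι w') := by
    rw [Polynomial.aeval_eq_sum_range, map_sum, Polynomial.eval_eq_sum_range, Finset.sum_mul]
    refine Finset.sum_congr rfl fun i _ => ?_
    rw [map_smul, hpow, smul_eq_mul]
    ring
  -- the Q-side vanishes
  have hQpow : Polynomial.aeval Φd Q
      = ∑ j ∈ Finset.range (Q.natDegree + 1), Q.coeff j • Φd ^ j :=
    Polynomial.aeval_eq_sum_range Φd
  have hQside : ∀ g : MvPolynomial (Fin 2) K,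
      E (g * Polynomial.aeval (MvPolynomial.X 1) Q) = 0 := by
    intro g
    induction g using MvPolynomial.induction_on' with
    | monomial m k =>
        rw [Polynomial.aeval_eq_sum_range, Finset.mul_sum]
        rw [map_sum]
        have hterm : ∀ j : ℕ,
            E (MvPolynomial.monomial m k * (Q.coeff j • MvPolynomial.X 1 ^ j))
              = Q.coeff j * (k * (((Φd ^ (m 1)) ((Φd ^ j) lam)) (ι ((Φ ^ (m 0)) w')))) := by
          intro j
          rw [mul_smul_comm, map_smul, hX1, smul_eq_mul]
          congr 2
          show ((Φd ^ (m 1 + j)) lam) (ι ((Φ ^ (m 0)) w')) = _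
          rw [pow_add, Module.End.mul_apply]
        calc (∑ j ∈ Finset.range (Q.natDegree + 1),
                E (MvPolynomial.monomial m k * (Q.coeff j • MvPolynomial.X 1 ^ j)))
            = ∑ j ∈ Finset.range (Q.natDegree + 1),
                k * (((Φd ^ (m 1)) (Q.coeff j • ((Φd ^ j) lam))) (ι ((Φ ^ (m 0)) w'))) := by
              refine Finset.sum_congr rfl fun j _ => ?_
              rw [hterm j, map_smul, LinearMap.smul_apply, smul_eq_mul]
              ring
          _ = k * (((Φd ^ (m 1)) (∑ j ∈ Finset.range (Q.natDegree + 1),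
                Q.coeff j • ((Φd ^ j) lam))) (ι ((Φ ^ (m 0)) w'))) := by
              rw [← Finset.mul_sum]
              congr 1
              rw [map_sum, LinearMap.sum_apply]
          _ = 0 := by
              have : (∑ j ∈ Finset.range (Q.natDegree + 1), Q.coeff j • ((Φd ^ j) lam))
                  = Polynomial.aeval Φd Q lam := by
                rw [hQpow, LinearMap.sum_apply]
                refine Finset.sum_congr rfl fun j _ => ?_
                rw [LinearMap.smul_apply]
              rw [this, hQlam]
              simp
    | add p r hp hr =>
        rw [add_mul, map_add, hp, hr, add_zero]
  -- the P-side gives W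
  have hPmono : ∀ (m : Fin 2 →₀ ℕ) (k : K),
      E (MvPolynomial.monomial m k * Polynomial.aeval (MvPolynomial.X 0) P)
        = k * ((Φd ^ (m 1)) lam) (ι ((Φ ^ (m 0)) w)) := by
    intro m k
    rw [Polynomial.aeval_eq_sum_range, Finset.mul_sum, map_sum]
    have hterm : ∀ i : ℕ,
        E (MvPolynomial.monomial m k * (P.coeff i • MvPolynomial.X 0 ^ i))
          = k * (((Φd ^ (m 1)) lam) (ι ((Φ ^ (m 0)) (P.coeff i • ((Φ ^ i) w'))))) := by
      intro i
      rw [mul_smul_comm, map_smul, hX0, smul_eq_mul]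
      have : cf (m 0 + i) (m 1)
          = ((Φd ^ (m 1)) lam) (ι ((Φ ^ (m 0)) ((Φ ^ i) w'))) := by
        show ((Φd ^ (m 1)) lam) (ι ((Φ ^ (m 0 + i)) w')) = _
        rw [pow_add, Module.End.mul_apply]
      rw [this, map_smul, map_smul, map_smul, smul_eq_mul]
      ring
    calc (∑ i ∈ Finset.range (P.natDegree + 1),
            E (MvPolynomial.monomial m k * (P.coeff i • MvPolynomial.X 0 ^ i)))
        = ∑ i ∈ Finset.range (P.natDegree + 1),
            k * (((Φd ^ (m 1)) lam) (ι ((Φ ^ (m 0)) (P.coeff i • ((Φ ^ i) w'))))) := by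
          exact Finset.sum_congr rfl fun i _ => hterm i
      _ = k * (((Φd ^ (m 1)) lam) (ι ((Φ ^ (m 0))
            (∑ i ∈ Finset.range (P.natDegree + 1), P.coeff i • ((Φ ^ i) w'))))) := by
          rw [← Finset.mul_sum, ← map_sum ((Φd ^ (m 1)) lam), ← map_sum ι, ← map_sum (Φ ^ (m 0))]
      _ = k * ((Φd ^ (m 1)) lam) (ι ((Φ ^ (m 0)) w)) := by
          have hsum : (∑ i ∈ Finset.range (P.natDegree + 1), P.coeff i • ((Φ ^ i) w')) = w := by
            rw [← hw', Polynomial.aeval_eq_sum_range, LinearMap.sum_apply]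
            exact Finset.sum_congr rfl fun i _ => (LinearMap.smul_apply _ _ _).symm
          rw [hsum]
  have hPside : E (a * Polynomial.aeval (MvPolynomial.X 0) P) = W := by
    conv_lhs => rw [MvPolynomial.as_sum a]
    rw [Finset.sum_mul, map_sum, hW]
    exact Finset.sum_congr rfl fun m _ => hPmono m (MvPolynomial.coeff m a)
  -- combine
  have hmain : W = R.eval q⁻¹ * lam (ι w') := by
    have h := congrArg E hab
    rw [map_add, hPside, hQside b, add_zero, hRside] at h
    exact h
  rw [map_sub, hmain, inv_mul_cancel_left₀ hRq]
end

section
/- Cup product on the 3-term complexes: Given finite-dimensional modules D₁, D₂ with operators Φ₁, Φ₂, N₁, N₂ (N_iΦ_i = qΦ_iN_i), polynomials P₁, P₂ ∈ 1+T·K[T], polynomials a, b with a(T₁,T₂)P₁(T₁) + b(T₁,T₂)P₂(T₂) = (P₁⋆P₂)(T₁T₂), and λ ∈ K, the bilinear maps given by the table in the paper — e.g. in degrees (0,0): (u,v)·(u',v') = (u⊗u', v⊗v'); in degrees (0,1): (u,v)·(w',x',y') = (b(Φ₁,Φ₂)(u⊗w'), u⊗x', (λu + (1-λ)v)⊗y');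 etc. — define a map of complexes C_{st,P₁}(D₁) ⊗ C_{st,P₂}(D₂) → C_{st,P₁⋆P₂}(D₁⊗D₂), i.e. satisfy the Leibniz rule d(α·β) = dα·β + (-1)^{deg α} α·dβ. -/
/-!
Evaluating the Bézout identity `a P₁(T₁) + b P₂(T₂) = R(T₁T₂)` at the commuting operators
`Φ₁ ⊗ 1` and `1 ⊗ Φ₂`, or at their `q`-twists `qΦ₁ ⊗ 1`, `1 ⊗ qΦ₂` (whose product is `qΦ`), gives
the `P`-components of the Leibniz rule. For the `N`-components, `N₁ ⊗ 1` skew-commutes with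
`Φ₁ ⊗ 1` by the factor `q` and commutes with `1 ⊗ Φ₂` (symmetrically for `1 ⊗ N₂`), so
`N f(Φ₁ ⊗ 1, 1 ⊗ Φ₂) = f(qΦ₁ ⊗ 1, 1 ⊗ Φ₂) (N₁ ⊗ 1) + f(Φ₁ ⊗ 1, 1 ⊗ qΦ₂) (1 ⊗ N₂)` for every
two-variable polynomial `f`. The comparison component in bidegree `(0,0)` is a bilinear identity.
-/

open Polynomial TensorProduct

/-- Evaluation of a two-variable polynomial at two commuting endomorphisms:
`p(F, G) = ∑ c_{ij} Fⁱ ∘ Gʲ`. -/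
noncomputable def evalEnd2 {K M : Type*} [CommSemiring K] [AddCommGroup M]
    [Module K M] (p : MvPolynomial (Fin 2) K) (F G : Module.End K M) :
    Module.End K M :=
  ∑ m ∈ p.support, MvPolynomial.coeff m p • (F ^ (m 0) * G ^ (m 1))

section EvalEnd2

variable {K M : Type*} [CommSemiring K] [AddCommGroup M] [Module K M]

open scoped IsMulCommutative in
/-- `evalEnd2 · A B` factors through the commutative subalgebra generated by `A` and `B`. -/
theorem exists_algHom_evalEnd2 {A B : Module.End K M} (h : Commute A B) :
    ∃ ev : MvPolynomial (Fin 2) K →ₐ[K] Module.End K M,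
      ev (MvPolynomial.X 0) = A ∧ ev (MvPolynomial.X 1) = B ∧ ∀ p, ev p = evalEnd2 p A B := by
  let S := Algebra.adjoin K ({A, B} : Set (Module.End K M))
  have : IsMulCommutative S := Algebra.isMulCommutative_adjoin K <| by
    rintro x (rfl | rfl) y (rfl | rfl) <;> simp [h.eq]
  let v : Fin 2 → S := ![⟨A, Algebra.subset_adjoin (by simp)⟩, ⟨B, Algebra.subset_adjoin (by simp)⟩]
  refine ⟨S.val.comp (MvPolynomial.aeval v), by simp [v], by simp [v], fun p => ?_⟩
  simp only [AlgHom.comp_apply, MvPolynomial.aeval_def, MvPolynomial.eval₂_eq', map_sum, evalEnd2]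
  refine Finset.sum_congr rfl fun m _ => ?_
  simp [Fin.prod_univ_two, Algebra.smul_def, v]

theorem semiconjBy_evalEnd2 {T A B : Module.End K M} {c d : K}
    (hA : SemiconjBy T A (c • A)) (hB : SemiconjBy T B (d • B)) (p : MvPolynomial (Fin 2) K) :
    SemiconjBy T (evalEnd2 p A B) (evalEnd2 p (c • A) (d • B)) := by
  simp only [SemiconjBy, evalEnd2, Finset.mul_sum, Finset.sum_mul]
  exact Finset.sum_congr rfl fun m _ =>
    (((hA.pow_right _).mul_right (hB.pow_right _)).smul_right _).eq

theorem aeval_mul_eq_of_bezout {P₁ P₂ R : K[X]} {a b : MvPolynomial (Fin 2) K}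
    (hab : a * aeval (MvPolynomial.X 0) P₁ + b * aeval (MvPolynomial.X 1) P₂
      = aeval (MvPolynomial.X 0 * MvPolynomial.X 1) R)
    {A B : Module.End K M} (h : Commute A B) :
    aeval (A * B) R = evalEnd2 a A B * aeval A P₁ + evalEnd2 b A B * aeval B P₂ := by
  obtain ⟨ev, hX₀, hX₁, hev⟩ := exists_algHom_evalEnd2 h
  have := congrArg ev hab
  rw [map_add, map_mul, map_mul, ← aeval_algHom_apply, ← aeval_algHom_apply,
    ← aeval_algHom_apply, map_mul, hX₀, hX₁, hev, hev] at this
  exact this.symm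

end EvalEnd2

section Tensor

variable {K D₁ D₂ : Type*} [CommSemiring K] [AddCommGroup D₁] [Module K D₁]
  [AddCommGroup D₂] [Module K D₂]

theorem aeval_rTensor (f : Module.End K D₁) (p : K[X]) :
    aeval (f.rTensor D₂) p = (aeval f p).rTensor D₂ :=
  aeval_algHom_apply (Module.End.rTensorAlgHom K D₁ D₂) f p

theorem aeval_lTensor (f : Module.End K D₂) (p : K[X]) :
    aeval (f.lTensor D₁) p = (aeval f p).lTensor D₁ :=
  aeval_algHom_apply (Module.End.lTensorAlgHom K D₂ D₁) f p

theorem commute_rTensor_lTensor (f : Module.End K D₁) (g : Module.End K D₂) :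
    Commute (f.rTensor D₂) (g.lTensor D₁) :=
  (LinearMap.rTensor_comp_lTensor _ f g).trans (LinearMap.lTensor_comp_rTensor _ f g).symm

theorem rTensor_add_lTensor_mul_evalEnd2 {Φ₁ N₁ : Module.End K D₁} {Φ₂ N₂ : Module.End K D₂}
    {c₁ c₂ : K} (h₁ : SemiconjBy N₁ Φ₁ (c₁ • Φ₁)) (h₂ : SemiconjBy N₂ Φ₂ (c₂ • Φ₂))
    (p : MvPolynomial (Fin 2) K) :
    (N₁.rTensor D₂ + N₂.lTensor D₁) * evalEnd2 p (Φ₁.rTensor D₂) (Φ₂.lTensor D₁)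
      = evalEnd2 p (c₁ • Φ₁.rTensor D₂) (Φ₂.lTensor D₁) * N₁.rTensor D₂
        + evalEnd2 p (Φ₁.rTensor D₂) (c₂ • Φ₂.lTensor D₁) * N₂.lTensor D₁ := by
  have h₁' : SemiconjBy (N₁.rTensor D₂) (Φ₁.rTensor D₂) (c₁ • Φ₁.rTensor D₂) := by
    simpa only [SemiconjBy, LinearMap.rTensor_mul, LinearMap.rTensor_smul]
      using congrArg (LinearMap.rTensor D₂) h₁.eq
  have h₂' : SemiconjBy (N₂.lTensor D₁) (Φ₂.lTensor D₁) (c₂ • Φ₂.lTensor D₁) := by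
    simpa only [SemiconjBy, LinearMap.lTensor_mul, LinearMap.lTensor_smul]
      using congrArg (LinearMap.lTensor D₁) h₂.eq
  have h₁₂ : SemiconjBy (N₁.rTensor D₂) (Φ₂.lTensor D₁) ((1 : K) • Φ₂.lTensor D₁) := by
    rw [one_smul]; exact commute_rTensor_lTensor N₁ Φ₂
  have h₂₁ : SemiconjBy (N₂.lTensor D₁) (Φ₁.rTensor D₂) ((1 : K) • Φ₁.rTensor D₂) := by
    rw [one_smul]; exact (commute_rTensor_lTensor Φ₁ N₂).symm
  rw [add_mul, (semiconjBy_evalEnd2 h₁' h₁₂ p).eq, (semiconjBy_evalEnd2 h₂₁ h₂' p).eq,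
    one_smul, one_smul]

end Tensor

theorem tmul_sub_tmul_eq_interpolate {R M N : Type*} [CommRing R] [AddCommGroup M] [Module R M]
    [AddCommGroup N] [Module R N] (x v : M) (x' v' : N) (t : R) :
    x ⊗ₜ[R] x' - v ⊗ₜ[R] v'
      = (x - v) ⊗ₜ[R] ((1 - t) • x' + t • v') + (t • x + (1 - t) • v) ⊗ₜ[R] (x' - v') := by
  simp only [tmul_sub, sub_tmul, tmul_add, add_tmul, tmul_smul, ← smul_tmul']
  module

section Leibniz

variable {K D₁ D₂ : Type*} [CommSemiring K] [AddCommGroup D₁] [Module K D₁]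
  [AddCommGroup D₂] [Module K D₂]
  {Φ₁ N₁ : Module.End K D₁} {Φ₂ N₂ : Module.End K D₂} {P₁ P₂ R : K[X]}
  {a b : MvPolynomial (Fin 2) K} {q : K}

theorem cupProduct_leibniz_zero_one
    (hab : a * aeval (MvPolynomial.X 0) P₁ + b * aeval (MvPolynomial.X 1) P₂
      = aeval (MvPolynomial.X 0 * MvPolynomial.X 1) R)
    (h₁ : SemiconjBy N₁ Φ₁ (q • Φ₁)) (h₂ : SemiconjBy N₂ Φ₂ (q • Φ₂)) (u : D₁) (w' x' : D₂) :
    (N₁.rTensor D₂ + N₂.lTensor D₁) (evalEnd2 b (Φ₁.rTensor D₂) (Φ₂.lTensor D₁) (u ⊗ₜ w'))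
        - aeval (q • (Φ₁.rTensor D₂ * Φ₂.lTensor D₁)) R (u ⊗ₜ x')
      = -(evalEnd2 a (Φ₁.rTensor D₂) (q • Φ₂.lTensor D₁) (aeval Φ₁ P₁ u ⊗ₜ x'))
        + evalEnd2 b (q • Φ₁.rTensor D₂) (Φ₂.lTensor D₁) (N₁ u ⊗ₜ w')
        + evalEnd2 b (Φ₁.rTensor D₂) (q • Φ₂.lTensor D₁) (u ⊗ₜ (N₂ w' - aeval (q • Φ₂) P₂ x')) := by
  have hN := LinearMap.congr_fun (rTensor_add_lTensor_mul_evalEnd2 h₁ h₂ b) (u ⊗ₜ w')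
  have hR := LinearMap.congr_fun
    (aeval_mul_eq_of_bezout hab ((commute_rTensor_lTensor Φ₁ Φ₂).smul_right q)) (u ⊗ₜ x')
  rw [← mul_smul_comm]
  simp only [Module.End.mul_apply, LinearMap.add_apply, LinearMap.rTensor_tmul,
    LinearMap.lTensor_tmul, aeval_rTensor, ← LinearMap.lTensor_smul, aeval_lTensor] at hN hR ⊢
  rw [hN, hR, tmul_sub, map_sub]
  abel

theorem cupProduct_leibniz_one_zero
    (hab : a * aeval (MvPolynomial.X 0) P₁ + b * aeval (MvPolynomial.X 1) P₂
      = aeval (MvPolynomial.X 0 * MvPolynomial.X 1) R)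
    (h₁ : SemiconjBy N₁ Φ₁ (q • Φ₁)) (h₂ : SemiconjBy N₂ Φ₂ (q • Φ₂)) (w x : D₁) (u' : D₂) :
    (N₁.rTensor D₂ + N₂.lTensor D₁) (evalEnd2 a (Φ₁.rTensor D₂) (Φ₂.lTensor D₁) (w ⊗ₜ u'))
        - aeval (q • (Φ₁.rTensor D₂ * Φ₂.lTensor D₁)) R (x ⊗ₜ u')
      = evalEnd2 a (q • Φ₁.rTensor D₂) (Φ₂.lTensor D₁) ((N₁ w - aeval (q • Φ₁) P₁ x) ⊗ₜ u')
        - (-(evalEnd2 a (Φ₁.rTensor D₂) (q • Φ₂.lTensor D₁) (w ⊗ₜ N₂ u'))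
          + evalEnd2 b (q • Φ₁.rTensor D₂) (Φ₂.lTensor D₁) (x ⊗ₜ aeval Φ₂ P₂ u')) := by
  have hN := LinearMap.congr_fun (rTensor_add_lTensor_mul_evalEnd2 h₁ h₂ a) (w ⊗ₜ u')
  have hR := LinearMap.congr_fun
    (aeval_mul_eq_of_bezout hab ((commute_rTensor_lTensor Φ₁ Φ₂).smul_left q)) (x ⊗ₜ u')
  rw [← smul_mul_assoc]
  simp only [Module.End.mul_apply, LinearMap.add_apply, LinearMap.rTensor_tmul,
    LinearMap.lTensor_tmul, ← LinearMap.rTensor_smul, aeval_rTensor, aeval_lTensor] at hN hR ⊢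
  rw [hN, hR, sub_tmul, map_sub]
  abel

end Leibniz

/-- Only the bidegrees `(0,0)`, `(0,1)`, `(1,0)` appear: in the higher ones both sides of the
Leibniz rule vanish, the target complex being zero beyond degree `2`. -/
theorem cup_product_chain_map_general
    (K : Type*) [Field K] (q : K)
    (D1 D2 D1K D2K : Type*)
    [AddCommGroup D1] [Module K D1]
    [AddCommGroup D2] [Module K D2]
    [AddCommGroup D1K] [Module K D1K] [AddCommGroup D2K] [Module K D2K]
    (Φ1 N1 : Module.End K D1)
    (hN1 : N1 * Φ1 = q • (Φ1 * N1))
    (ι1 : D1 ≃ₗ[K] D1K) (Fil1 : Submodule K D1K)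
    (Φ2 N2 : Module.End K D2)
    (hN2 : N2 * Φ2 = q • (Φ2 * N2))
    (ι2 : D2 ≃ₗ[K] D2K) (Fil2 : Submodule K D2K)
    (P1 P2 R : K[X])
    -- `R = P₁ ⋆ P₂` together with the Bézout-type data `a, b`:
    (a b : MvPolynomial (Fin 2) K)
    (hab : a * Polynomial.aeval (MvPolynomial.X 0) P1
        + b * Polynomial.aeval (MvPolynomial.X 1) P2
        = Polynomial.aeval (MvPolynomial.X 0 * MvPolynomial.X 1) R)
    (lam : K)
    -- the operators `Φ₁ ⊗ 1`, `1 ⊗ Φ₂`, `Φ = Φ₁ ⊗ Φ₂` and `N = N₁⊗1 + 1⊗N₂`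
    -- on the tensor product:
    (E1 E2 ΦT NT : Module.End K (D1 ⊗[K] D2))
    (hE1 : E1 = TensorProduct.map Φ1 (LinearMap.id : D2 →ₗ[K] D2))
    (hE2 : E2 = TensorProduct.map (LinearMap.id : D1 →ₗ[K] D1) Φ2)
    (hΦT : ΦT = TensorProduct.map Φ1 Φ2)
    (hNT : NT = TensorProduct.map N1 (LinearMap.id : D2 →ₗ[K] D2)
        + TensorProduct.map (LinearMap.id : D1 →ₗ[K] D1) N2) :
    -- Leibniz in bidegree (0,0):
    (∀ (u : D1) (u' : D2) (v : Fil1) (v' : Fil2),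
      Polynomial.aeval ΦT R (u ⊗ₜ[K] u')
          = evalEnd2 a E1 E2 ((Polynomial.aeval Φ1 P1 u) ⊗ₜ[K] u')
            + evalEnd2 b E1 E2 (u ⊗ₜ[K] (Polynomial.aeval Φ2 P2 u'))
        ∧ NT (u ⊗ₜ[K] u') = (N1 u) ⊗ₜ[K] u' + u ⊗ₜ[K] (N2 u')
        ∧ TensorProduct.congr ι1 ι2 (u ⊗ₜ[K] u') - (v : D1K) ⊗ₜ[K] (v' : D2K)
          = (ι1 u - (v : D1K)) ⊗ₜ[K] ((1 - lam) • ι2 u' + lam • (v' : D2K))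
            + (lam • ι1 u + (1 - lam) • (v : D1K)) ⊗ₜ[K] (ι2 u' - (v' : D2K))) ∧
    -- Leibniz in bidegree (0,1):
    (∀ (u : D1) (v : Fil1) (w' x' : D2) (y' : D2K),
      NT (evalEnd2 b E1 E2 (u ⊗ₜ[K] w'))
          - Polynomial.aeval (q • ΦT) R (u ⊗ₜ[K] x')
        = -(evalEnd2 a E1 (q • E2) ((Polynomial.aeval Φ1 P1 u) ⊗ₜ[K] x'))
          + evalEnd2 b (q • E1) E2 ((N1 u) ⊗ₜ[K] w')
          + evalEnd2 b E1 (q • E2)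
              (u ⊗ₜ[K] (N2 w' - Polynomial.aeval (q • Φ2) P2 x'))) ∧
    -- Leibniz in bidegree (1,0):
    (∀ (w x : D1) (y : D1K) (u' : D2) (v' : Fil2),
      NT (evalEnd2 a E1 E2 (w ⊗ₜ[K] u'))
          - Polynomial.aeval (q • ΦT) R (x ⊗ₜ[K] u')
        = evalEnd2 a (q • E1) E2
              ((N1 w - Polynomial.aeval (q • Φ1) P1 x) ⊗ₜ[K] u')
          - (-(evalEnd2 a E1 (q • E2) (w ⊗ₜ[K] (N2 u')))
              + evalEnd2 b (q • E1) E2 (x ⊗ₜ[K] (Polynomial.aeval Φ2 P2 u')))) := by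
  obtain rfl : E1 = Φ1.rTensor D2 := hE1
  obtain rfl : E2 = Φ2.lTensor D1 := hE2
  obtain rfl : NT = N1.rTensor D2 + N2.lTensor D1 := hNT
  obtain rfl : ΦT = Φ1.rTensor D2 * Φ2.lTensor D1 :=
    hΦT.trans (LinearMap.rTensor_comp_lTensor _ Φ1 Φ2).symm
  have h₁ : SemiconjBy N1 Φ1 (q • Φ1) := hN1.trans (smul_mul_assoc q Φ1 N1).symm
  have h₂ : SemiconjBy N2 Φ2 (q • Φ2) := hN2.trans (smul_mul_assoc q Φ2 N2).symm
  refine ⟨fun u u' v v' => ⟨?_, by simp, ?_⟩,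
    fun u _ w' x' _ => cupProduct_leibniz_zero_one hab h₁ h₂ u w' x',
    fun w x _ u' _ => cupProduct_leibniz_one_zero hab h₁ h₂ w x u'⟩
  · simpa [aeval_rTensor, aeval_lTensor] using LinearMap.congr_fun
      (aeval_mul_eq_of_bezout hab (commute_rTensor_lTensor Φ1 Φ2)) (u ⊗ₜ u')
  · rw [TensorProduct.congr_tmul]
    exact tmul_sub_tmul_eq_interpolate _ _ _ _ lam

/-- the explicit cup-product formulas of the paper define a map
of complexes `C_{st,P₁}(D₁) ⊗ C_{st,P₂}(D₂) → C_{st,P₁⋆P₂}(D₁⊗D₂)`, i.e. the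
Leibniz rule `d(α·β) = dα·β + (-1)^{deg α} α·dβ` holds; on pure tensors this
amounts to the three identities below (in bidegrees `(0,0)`, `(0,1)` and
`(1,0)`; in all higher bidegrees both sides vanish). -/
theorem cup_product_chain_map
    (K : Type*) [Field K] [CharZero K] (q : K) (hq : q ≠ 0)
    (D1 D2 D1K D2K : Type*)
    [AddCommGroup D1] [Module K D1] [FiniteDimensional K D1]
    [AddCommGroup D2] [Module K D2] [FiniteDimensional K D2]
    [AddCommGroup D1K] [Module K D1K] [AddCommGroup D2K] [Module K D2K]
    (Φ1 N1 : Module.End K D1) (hΦ1 : Function.Bijective Φ1)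
    (hN1 : N1 * Φ1 = q • (Φ1 * N1))
    (ι1 : D1 ≃ₗ[K] D1K) (Fil1 : Submodule K D1K)
    (Φ2 N2 : Module.End K D2) (hΦ2 : Function.Bijective Φ2)
    (hN2 : N2 * Φ2 = q • (Φ2 * N2))
    (ι2 : D2 ≃ₗ[K] D2K) (Fil2 : Submodule K D2K)
    (P1 P2 R : K[X])
    (hP10 : P1.coeff 0 = 1) (hP20 : P2.coeff 0 = 1) (hR0 : R.coeff 0 = 1)
    -- `R = P₁ ⋆ P₂` together with the Bézout-type data `a, b`:
    (a b : MvPolynomial (Fin 2) K)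
    (hab : a * Polynomial.aeval (MvPolynomial.X 0) P1
        + b * Polynomial.aeval (MvPolynomial.X 1) P2
        = Polynomial.aeval (MvPolynomial.X 0 * MvPolynomial.X 1) R)
    (lam : K)
    -- the operators `Φ₁ ⊗ 1`, `1 ⊗ Φ₂`, `Φ = Φ₁ ⊗ Φ₂` and `N = N₁⊗1 + 1⊗N₂`
    -- on the tensor product:
    (E1 E2 ΦT NT : Module.End K (D1 ⊗[K] D2))
    (hE1 : E1 = TensorProduct.map Φ1 (LinearMap.id : D2 →ₗ[K] D2))
    (hE2 : E2 = TensorProduct.map (LinearMap.id : D1 →ₗ[K] D1) Φ2)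
    (hΦT : ΦT = TensorProduct.map Φ1 Φ2)
    (hNT : NT = TensorProduct.map N1 (LinearMap.id : D2 →ₗ[K] D2)
        + TensorProduct.map (LinearMap.id : D1 →ₗ[K] D1) N2) :
    -- Leibniz in bidegree (0,0):
    (∀ (u : D1) (u' : D2) (v : Fil1) (v' : Fil2),
      Polynomial.aeval ΦT R (u ⊗ₜ[K] u')
          = evalEnd2 a E1 E2 ((Polynomial.aeval Φ1 P1 u) ⊗ₜ[K] u')
            + evalEnd2 b E1 E2 (u ⊗ₜ[K] (Polynomial.aeval Φ2 P2 u'))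
        ∧ NT (u ⊗ₜ[K] u') = (N1 u) ⊗ₜ[K] u' + u ⊗ₜ[K] (N2 u')
        ∧ TensorProduct.congr ι1 ι2 (u ⊗ₜ[K] u') - (v : D1K) ⊗ₜ[K] (v' : D2K)
          = (ι1 u - (v : D1K)) ⊗ₜ[K] ((1 - lam) • ι2 u' + lam • (v' : D2K))
            + (lam • ι1 u + (1 - lam) • (v : D1K)) ⊗ₜ[K] (ι2 u' - (v' : D2K))) ∧
    -- Leibniz in bidegree (0,1):
    (∀ (u : D1) (v : Fil1) (w' x' : D2) (y' : D2K),
      NT (evalEnd2 b E1 E2 (u ⊗ₜ[K] w'))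
          - Polynomial.aeval (q • ΦT) R (u ⊗ₜ[K] x')
        = -(evalEnd2 a E1 (q • E2) ((Polynomial.aeval Φ1 P1 u) ⊗ₜ[K] x'))
          + evalEnd2 b (q • E1) E2 ((N1 u) ⊗ₜ[K] w')
          + evalEnd2 b E1 (q • E2)
              (u ⊗ₜ[K] (N2 w' - Polynomial.aeval (q • Φ2) P2 x'))) ∧
    -- Leibniz in bidegree (1,0):
    (∀ (w x : D1) (y : D1K) (u' : D2) (v' : Fil2),
      NT (evalEnd2 a E1 E2 (w ⊗ₜ[K] u'))
          - Polynomial.aeval (q • ΦT) R (x ⊗ₜ[K] u')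
        = evalEnd2 a (q • E1) E2
              ((N1 w - Polynomial.aeval (q • Φ1) P1 x) ⊗ₜ[K] u')
          - (-(evalEnd2 a E1 (q • E2) (w ⊗ₜ[K] (N2 u')))
              + evalEnd2 b (q • E1) E2 (x ⊗ₜ[K] (Polynomial.aeval Φ2 P2 u')))) :=
  cup_product_chain_map_general K q D1 D2 D1K D2K Φ1 N1 hN1 ι1 Fil1 Φ2 N2 hN2 ι2 Fil2 P1 P2 R a b
    hab lam E1 E2 ΦT NT hE1 hE2 hΦT hNT
end

section
/- Changing λ to λ' in the cup-product formulas of the preceding statement changes the product map by a chain homotopy: there exists a degree -1 map h on the tensor complex such that (product with λ) - (product with λ') = d∘h + h∘d. -/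
/-!
The two products differ only in the last coordinate of the degree-one products, and those
differences are `(λ - λ')` times the last coordinate of the degree-one differential tensored
with the other factor. So a homotopy concentrated in bidegree `(1,1)`,
`h((w, x, y), (w', x', y')) = (0, 0, (λ - λ') • y ⊗ y')`, with all other components zero,
does the job; in total degree two it is invisible because `d1T` ignores the last coordinate.
-/

open Polynomial TensorProduct

section tmulLast

variable {R A B C A' B' C' M N : Type*} [CommSemiring R]
  [AddCommMonoid A] [Module R A] [AddCommMonoid B] [Module R B] [AddCommMonoid C] [Module R C]
  [AddCommMonoid A'] [Module R A'] [AddCommMonoid B'] [Module R B']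
  [AddCommMonoid C'] [Module R C'] [AddCommMonoid M] [Module R M] [AddCommMonoid N] [Module R N]

noncomputable def tmulLast (c : R) :
    (A × B × C) →ₗ[R] (A' × B' × C') →ₗ[R] (M × N × (C ⊗[R] C')) :=
  c • ((TensorProduct.mk R C C').compl₁₂
      ((LinearMap.snd R B C).comp (LinearMap.snd R A (B × C)))
      ((LinearMap.snd R B' C').comp (LinearMap.snd R A' (B' × C')))).compr₂
    ((LinearMap.inr R M (N × (C ⊗[R] C'))).comp (LinearMap.inr R N (C ⊗[R] C')))

@[simp]
theorem tmulLast_apply (c : R) (p : A × B × C) (r : A' × B' × C') :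
    tmulLast (M := M) (N := N) c p r = (0, 0, c • p.2.2 ⊗ₜ r.2.2) := by
  simp [tmulLast, Prod.smul_def]

end tmulLast

theorem cup_product_lambda_homotopy_general
    (K : Type*) [Field K] (q : K)
    (D1 D2 D1K D2K : Type*)
    [AddCommGroup D1] [Module K D1]
    [AddCommGroup D2] [Module K D2]
    [AddCommGroup D1K] [Module K D1K] [AddCommGroup D2K] [Module K D2K]
    (Φ1 N1 : Module.End K D1)
    (ι1 : D1 ≃ₗ[K] D1K) (Fil1 : Submodule K D1K)
    (Φ2 N2 : Module.End K D2)
    (ι2 : D2 ≃ₗ[K] D2K) (Fil2 : Submodule K D2K)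
    (P1 P2 R : K[X])
    (lam lam' : K)
    -- tensor-product data: operators, filtration, differentials
    (ΦT NT : Module.End K (D1 ⊗[K] D2))
    (FilT : Submodule K (D1K ⊗[K] D2K))
    -- the differentials of the three complexes involved
    (d01 : (D1 × Fil1) →ₗ[K] (D1 × D1 × D1K))
    (hd01 : ∀ (u : D1) (v : Fil1),
      d01 (u, v) = (Polynomial.aeval Φ1 P1 u, N1 u, ι1 u - (v : D1K)))
    (d11 : (D1 × D1 × D1K) →ₗ[K] D1)
    (d02 : (D2 × Fil2) →ₗ[K] (D2 × D2 × D2K))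
    (hd02 : ∀ (u : D2) (v : Fil2),
      d02 (u, v) = (Polynomial.aeval Φ2 P2 u, N2 u, ι2 u - (v : D2K)))
    (d12 : (D2 × D2 × D2K) →ₗ[K] D2)
    (d0T : ((D1 ⊗[K] D2) × FilT) →ₗ[K]
      ((D1 ⊗[K] D2) × (D1 ⊗[K] D2) × (D1K ⊗[K] D2K)))
    (d1T : ((D1 ⊗[K] D2) × (D1 ⊗[K] D2) × (D1K ⊗[K] D2K)) →ₗ[K] (D1 ⊗[K] D2))
    (hd1T : ∀ (W X : D1 ⊗[K] D2) (Y : D1K ⊗[K] D2K),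
      d1T (W, X, Y) = NT W - Polynomial.aeval (q • ΦT) R X) :
    -- the chain homotopy
    ∃ (h01 : (D1 × Fil1) →ₗ[K] (D2 × D2 × D2K) →ₗ[K] ((D1 ⊗[K] D2) × FilT))
      (h10 : (D1 × D1 × D1K) →ₗ[K] (D2 × Fil2) →ₗ[K] ((D1 ⊗[K] D2) × FilT))
      (h02 : (D1 × Fil1) →ₗ[K] D2 →ₗ[K]
        ((D1 ⊗[K] D2) × (D1 ⊗[K] D2) × (D1K ⊗[K] D2K)))
      (h11 : (D1 × D1 × D1K) →ₗ[K] (D2 × D2 × D2K) →ₗ[K]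
        ((D1 ⊗[K] D2) × (D1 ⊗[K] D2) × (D1K ⊗[K] D2K)))
      (h20 : D1 →ₗ[K] (D2 × Fil2) →ₗ[K]
        ((D1 ⊗[K] D2) × (D1 ⊗[K] D2) × (D1K ⊗[K] D2K)))
      (h12 : (D1 × D1 × D1K) →ₗ[K] D2 →ₗ[K] (D1 ⊗[K] D2))
      (h21 : D1 →ₗ[K] (D2 × D2 × D2K) →ₗ[K] (D1 ⊗[K] D2)),
      -- total degree 0 (the (0,0)-products agree):
      (∀ (u : D1) (v : Fil1) (u' : D2) (v' : Fil2),
        (0 : (D1 ⊗[K] D2) × FilT)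
          = h10 (d01 (u, v)) (u', v') + h01 (u, v) (d02 (u', v'))) ∧
      -- total degree 1, bidegree (0,1):
      (∀ (u : D1) (v : Fil1) (w' x' : D2) (y' : D2K),
        ((0 : D1 ⊗[K] D2), (0 : D1 ⊗[K] D2),
            ((lam - lam') • (ι1 u - (v : D1K))) ⊗ₜ[K] y')
          = d0T (h01 (u, v) (w', x', y'))
            + h11 (d01 (u, v)) (w', x', y')
            + h02 (u, v) (d12 (w', x', y'))) ∧
      -- total degree 1, bidegree (1,0):
      (∀ (w x : D1) (y : D1K) (u' : D2) (v' : Fil2),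
        ((0 : D1 ⊗[K] D2), (0 : D1 ⊗[K] D2),
            y ⊗ₜ[K] ((lam - lam') • ((v' : D2K) - ι2 u')))
          = d0T (h10 (w, x, y) (u', v'))
            + h20 (d11 (w, x, y)) (u', v')
            - h11 (w, x, y) (d02 (u', v'))) ∧
      -- total degree 2, bidegree (1,1):
      (∀ (w x : D1) (y : D1K) (w' x' : D2) (y' : D2K),
        (0 : D1 ⊗[K] D2)
          = d1T (h11 (w, x, y) (w', x', y'))
            + h21 (d11 (w, x, y)) (w', x', y')
            - h12 (w, x, y) (d12 (w', x', y'))) ∧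
      -- total degree 2, bidegree (0,2):
      (∀ (u : D1) (v : Fil1) (z' : D2),
        (0 : D1 ⊗[K] D2) = d1T (h02 (u, v) z') + h12 (d01 (u, v)) z') ∧
      -- total degree 2, bidegree (2,0):
      (∀ (z : D1) (u' : D2) (v' : Fil2),
        (0 : D1 ⊗[K] D2) = d1T (h20 z (u', v')) + h21 z (d02 (u', v'))) := by
  refine ⟨0, 0, 0, tmulLast (lam - lam'), 0, 0, 0, ?_, ?_, ?_, ?_, ?_, ?_⟩
  · simp
  · intro u v w' x' y'
    simp [hd01, smul_tmul']
  · intro w x y u' v'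
    simp [hd02, tmul_smul, tmul_sub, smul_sub]
  · intro w x y w' x' y'
    simp [hd1T]
  · simp
  · simp

/-- changing the parameter `λ` to `λ'` in the explicit
cup-product formulas changes the product map by a chain homotopy: there are
degree `-1` bilinear maps `h_{i,j}` on the tensor complex with
`(product with λ) - (product with λ') = d∘h + h∘d` in every bidegree.  (The
products differ only in the third components of the `(0,1)` and `(1,0)`
products, by `((λ-λ')·(ι₁u - v)) ⊗ y'` resp. `y ⊗ ((λ-λ')·(v' - ι₂u'))`.) -/
theorem cup_product_lambda_homotopy
    (K : Type*) [Field K] [CharZero K] (q : K) (hq : q ≠ 0)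
    (D1 D2 D1K D2K : Type*)
    [AddCommGroup D1] [Module K D1] [FiniteDimensional K D1]
    [AddCommGroup D2] [Module K D2] [FiniteDimensional K D2]
    [AddCommGroup D1K] [Module K D1K] [AddCommGroup D2K] [Module K D2K]
    (Φ1 N1 : Module.End K D1) (hN1 : N1 * Φ1 = q • (Φ1 * N1))
    (ι1 : D1 ≃ₗ[K] D1K) (Fil1 : Submodule K D1K)
    (Φ2 N2 : Module.End K D2) (hN2 : N2 * Φ2 = q • (Φ2 * N2))
    (ι2 : D2 ≃ₗ[K] D2K) (Fil2 : Submodule K D2K)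
    (P1 P2 R : K[X])
    (hP10 : P1.coeff 0 = 1) (hP20 : P2.coeff 0 = 1) (hR0 : R.coeff 0 = 1)
    (a b : MvPolynomial (Fin 2) K)
    (hab : a * Polynomial.aeval (MvPolynomial.X 0) P1
        + b * Polynomial.aeval (MvPolynomial.X 1) P2
        = Polynomial.aeval (MvPolynomial.X 0 * MvPolynomial.X 1) R)
    (lam lam' : K)
    -- tensor-product data: operators, filtration, differentials
    (E1 E2 ΦT NT : Module.End K (D1 ⊗[K] D2))
    (hE1 : E1 = TensorProduct.map Φ1 (LinearMap.id : D2 →ₗ[K] D2))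
    (hE2 : E2 = TensorProduct.map (LinearMap.id : D1 →ₗ[K] D1) Φ2)
    (hΦT : ΦT = TensorProduct.map Φ1 Φ2)
    (hNT : NT = TensorProduct.map N1 (LinearMap.id : D2 →ₗ[K] D2)
        + TensorProduct.map (LinearMap.id : D1 →ₗ[K] D1) N2)
    (FilT : Submodule K (D1K ⊗[K] D2K))
    (hFilT : ∀ (v : Fil1) (v' : Fil2), (v : D1K) ⊗ₜ[K] (v' : D2K) ∈ FilT)
    -- the differentials of the three complexes involved
    (d01 : (D1 × Fil1) →ₗ[K] (D1 × D1 × D1K))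
    (hd01 : ∀ (u : D1) (v : Fil1),
      d01 (u, v) = (Polynomial.aeval Φ1 P1 u, N1 u, ι1 u - (v : D1K)))
    (d11 : (D1 × D1 × D1K) →ₗ[K] D1)
    (hd11 : ∀ (w x : D1) (y : D1K),
      d11 (w, x, y) = N1 w - Polynomial.aeval (q • Φ1) P1 x)
    (d02 : (D2 × Fil2) →ₗ[K] (D2 × D2 × D2K))
    (hd02 : ∀ (u : D2) (v : Fil2),
      d02 (u, v) = (Polynomial.aeval Φ2 P2 u, N2 u, ι2 u - (v : D2K)))
    (d12 : (D2 × D2 × D2K) →ₗ[K] D2)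
    (hd12 : ∀ (w x : D2) (y : D2K),
      d12 (w, x, y) = N2 w - Polynomial.aeval (q • Φ2) P2 x)
    (d0T : ((D1 ⊗[K] D2) × FilT) →ₗ[K]
      ((D1 ⊗[K] D2) × (D1 ⊗[K] D2) × (D1K ⊗[K] D2K)))
    (hd0T : ∀ (U : D1 ⊗[K] D2) (V : FilT),
      d0T (U, V) = (Polynomial.aeval ΦT R U, NT U,
        TensorProduct.congr ι1 ι2 U - (V : D1K ⊗[K] D2K)))
    (d1T : ((D1 ⊗[K] D2) × (D1 ⊗[K] D2) × (D1K ⊗[K] D2K)) →ₗ[K] (D1 ⊗[K] D2))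
    (hd1T : ∀ (W X : D1 ⊗[K] D2) (Y : D1K ⊗[K] D2K),
      d1T (W, X, Y) = NT W - Polynomial.aeval (q • ΦT) R X) :
    -- the chain homotopy
    ∃ (h01 : (D1 × Fil1) →ₗ[K] (D2 × D2 × D2K) →ₗ[K] ((D1 ⊗[K] D2) × FilT))
      (h10 : (D1 × D1 × D1K) →ₗ[K] (D2 × Fil2) →ₗ[K] ((D1 ⊗[K] D2) × FilT))
      (h02 : (D1 × Fil1) →ₗ[K] D2 →ₗ[K]
        ((D1 ⊗[K] D2) × (D1 ⊗[K] D2) × (D1K ⊗[K] D2K)))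
      (h11 : (D1 × D1 × D1K) →ₗ[K] (D2 × D2 × D2K) →ₗ[K]
        ((D1 ⊗[K] D2) × (D1 ⊗[K] D2) × (D1K ⊗[K] D2K)))
      (h20 : D1 →ₗ[K] (D2 × Fil2) →ₗ[K]
        ((D1 ⊗[K] D2) × (D1 ⊗[K] D2) × (D1K ⊗[K] D2K)))
      (h12 : (D1 × D1 × D1K) →ₗ[K] D2 →ₗ[K] (D1 ⊗[K] D2))
      (h21 : D1 →ₗ[K] (D2 × D2 × D2K) →ₗ[K] (D1 ⊗[K] D2)),
      -- total degree 0 (the (0,0)-products agree):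
      (∀ (u : D1) (v : Fil1) (u' : D2) (v' : Fil2),
        (0 : (D1 ⊗[K] D2) × FilT)
          = h10 (d01 (u, v)) (u', v') + h01 (u, v) (d02 (u', v'))) ∧
      -- total degree 1, bidegree (0,1):
      (∀ (u : D1) (v : Fil1) (w' x' : D2) (y' : D2K),
        ((0 : D1 ⊗[K] D2), (0 : D1 ⊗[K] D2),
            ((lam - lam') • (ι1 u - (v : D1K))) ⊗ₜ[K] y')
          = d0T (h01 (u, v) (w', x', y'))
            + h11 (d01 (u, v)) (w', x', y')
            + h02 (u, v) (d12 (w', x', y'))) ∧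
      -- total degree 1, bidegree (1,0):
      (∀ (w x : D1) (y : D1K) (u' : D2) (v' : Fil2),
        ((0 : D1 ⊗[K] D2), (0 : D1 ⊗[K] D2),
            y ⊗ₜ[K] ((lam - lam') • ((v' : D2K) - ι2 u')))
          = d0T (h10 (w, x, y) (u', v'))
            + h20 (d11 (w, x, y)) (u', v')
            - h11 (w, x, y) (d02 (u', v'))) ∧
      -- total degree 2, bidegree (1,1):
      (∀ (w x : D1) (y : D1K) (w' x' : D2) (y' : D2K),
        (0 : D1 ⊗[K] D2)
          = d1T (h11 (w, x, y) (w', x', y'))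
            + h21 (d11 (w, x, y)) (w', x', y')
            - h12 (w, x, y) (d12 (w', x', y'))) ∧
      -- total degree 2, bidegree (0,2):
      (∀ (u : D1) (v : Fil1) (z' : D2),
        (0 : D1 ⊗[K] D2) = d1T (h02 (u, v) z') + h12 (d01 (u, v)) z') ∧
      -- total degree 2, bidegree (2,0):
      (∀ (z : D1) (u' : D2) (v' : Fil2),
        (0 : D1 ⊗[K] D2) = d1T (h20 z (u', v')) + h21 z (d02 (u', v'))) :=
  cup_product_lambda_homotopy_general K q D1 D2 D1K D2K Φ1 N1 ι1 Fil1 Φ2 N2 ι2 Fil2 P1 P2 R lam lam'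
    ΦT NT FilT d01 hd01 d11 d02 hd02 d12 d0T d1T hd1T
end
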